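/- Fix real parameters m₁, m₂, r₁, r₂, g > 0 satisfying m₁ (r₂² − r₁ (r₁ + r₂)) ≠ m₂ r₁ (r₁ + r₂), m₁ (r₂² − r₁ (r₁ − r₂)) ≠ m₂ r₁ (r₁ − r₂), and m₁ r₁² ≠ m₂ (r₂² − r₁²). Let X₃ = [X₁, X₂]. Then for every z ∈ ℝ⁴, the vectors X₂(z) and X₃(z) are linearly independent in ℝ⁴. -/

import Mathlib

noncomputable section

/-- `Δ(θ) = r₁ r₂ (m₁ + m₂ sin²(θ₁ − θ₂))`. -/
def Δpend (m₁ m₂ r₁ r₂ : ℝ) (z : Fin 4 → ℝ) : ℝ :=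
  r₁ * r₂ * (m₁ + m₂ * Real.sin (z 0 - z 1) ^ 2)

def b₁pend (m₁ m₂ r₁ r₂ : ℝ) (z : Fin 4 → ℝ) : ℝ :=
  m₂ * r₂ * (r₁ * m₂ * Real.cos (z 0 - z 1) - r₂ * m₁)

def b₂pend (m₁ m₂ r₁ r₂ : ℝ) (z : Fin 4 → ℝ) : ℝ :=
  m₂ * r₁ * (r₂ * m₁ * Real.cos (z 0 - z 1) - r₁ * (m₁ + m₂))

def a₁pend (m₁ m₂ r₁ r₂ g : ℝ) (z : Fin 4 → ℝ) : ℝ :=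
  -g * r₂ * (m₂ * Real.sin (z 1) * Real.cos (z 0 - z 1)
      - (m₁ + m₂) * Real.sin (z 0))
  - m₂ * r₂ * Real.sin (z 0 - z 1) *
      (r₁ * Real.cos (z 0 - z 1) * (z 2) ^ 2 + r₂ * (z 3) ^ 2)

def a₂pend (m₁ m₂ r₁ r₂ g : ℝ) (z : Fin 4 → ℝ) : ℝ :=
  -g * r₁ * (m₁ + m₂) * (Real.cos (z 0 - z 1) * Real.sin (z 0) - Real.sin (z 1))
  + r₁ * Real.sin (z 0 - z 1) *
      (r₁ * (m₁ + m₂) * (z 2) ^ 2 + r₂ * m₂ * Real.cos (z 0 - z 1) * (z 3) ^ 2)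

/-- The drift-type vector field `X₁(z) = (Δ(θ) ω₁, Δ(θ) ω₂, a₁(z), a₂(z))`. -/
def X₁pend (m₁ m₂ r₁ r₂ g : ℝ) : (Fin 4 → ℝ) → (Fin 4 → ℝ) :=
  fun z => ![Δpend m₁ m₂ r₁ r₂ z * z 2, Δpend m₁ m₂ r₁ r₂ z * z 3,
    a₁pend m₁ m₂ r₁ r₂ g z, a₂pend m₁ m₂ r₁ r₂ g z]

/-- The control-type vector field `X₂(z) = (0, 0, b₁(θ), b₂(θ))`. -/
def X₂pend (m₁ m₂ r₁ r₂ : ℝ) : (Fin 4 → ℝ) → (Fin 4 → ℝ) :=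
  fun z => ![0, 0, b₁pend m₁ m₂ r₁ r₂ z, b₂pend m₁ m₂ r₁ r₂ z]

/-- The Lie bracket `[X, Y](z) = DY(z)·X(z) − DX(z)·Y(z)` of vector fields. -/
def lieBracket (X Y : (Fin 4 → ℝ) → (Fin 4 → ℝ)) : (Fin 4 → ℝ) → (Fin 4 → ℝ) :=
  fun z => fderiv ℝ Y z (X z) - fderiv ℝ X z (Y z)

/-- `X₃ = [X₁, X₂]`. -/
def X₃pend (m₁ m₂ r₁ r₂ g : ℝ) : (Fin 4 → ℝ) → (Fin 4 → ℝ) :=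
  lieBracket (X₁pend m₁ m₂ r₁ r₂ g) (X₂pend m₁ m₂ r₁ r₂)

/-- `X₄ = [X₂, X₃]`. -/
def X₄pend (m₁ m₂ r₁ r₂ g : ℝ) : (Fin 4 → ℝ) → (Fin 4 → ℝ) :=
  lieBracket (X₂pend m₁ m₂ r₁ r₂) (X₃pend m₁ m₂ r₁ r₂ g)

/-- The family `F = {X₁, X₂, X₃, X₄}`. -/
def Fpend (m₁ m₂ r₁ r₂ g : ℝ) : Set ((Fin 4 → ℝ) → (Fin 4 → ℝ)) :=
  {X₁pend m₁ m₂ r₁ r₂ g, X₂pend m₁ m₂ r₁ r₂,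
   X₃pend m₁ m₂ r₁ r₂ g, X₄pend m₁ m₂ r₁ r₂ g}

/-- Iterated Lie brackets `[Y₁,[…[Y_{k−1}, Y_k]…]]` of members of `F`
(including the members of `F` themselves). -/
inductive IterBracket (F : Set ((Fin 4 → ℝ) → (Fin 4 → ℝ))) :
    ((Fin 4 → ℝ) → (Fin 4 → ℝ)) → Prop
  | base {X} : X ∈ F → IterBracket F X
  | bracket {X Y} : X ∈ F → IterBracket F Y → IterBracket F (lieBracket X Y)

/-- `F` is bracket-generating on `ℝ⁴`. -/
def BracketGenerating (F : Set ((Fin 4 → ℝ) → (Fin 4 → ℝ))) : Prop :=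
  ∀ z : Fin 4 → ℝ,
    Submodule.span ℝ {v : Fin 4 → ℝ | ∃ B, IterBracket F B ∧ v = B z} = ⊤

end

/-!
`X₂` has no `θ`-components, whereas the `θ`-components of `X₃ = [X₁, X₂]` are
`−Δ(θ) (b₁(θ), b₂(θ))`: the `θ`-components of `X₁` are `Δ(θ) ω`, and `X₂` points in the
`ω`-directions. As `Δ > 0` and `b₁`, `b₂` never vanish together, some `θ`-coordinate
vanishes on `X₂ ≠ 0` but not on `X₃`.
-/

theorem LinearIndependent.pair_of_map_eq_zero_of_map_ne_zero {K V : Type*} [DivisionRing K]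
    [AddCommGroup V] [Module K V] {x y : V} (f : Module.Dual K V) (hx : x ≠ 0)
    (hfx : f x = 0) (hfy : f y ≠ 0) : LinearIndependent K ![x, y] :=
  (LinearIndependent.pair_iff' hx).2 fun a h => hfy (by rw [← h, map_smul, hfx, smul_zero])

theorem lieBracket_apply_eq {X Y : (Fin 4 → ℝ) → (Fin 4 → ℝ)} {z : Fin 4 → ℝ}
    (hX : DifferentiableAt ℝ X z) (hY : DifferentiableAt ℝ Y z) (i : Fin 4) :
    lieBracket X Y z i =
      fderiv ℝ (fun z => Y z i) z (X z) - fderiv ℝ (fun z => X z i) z (Y z) := by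
  simp [lieBracket, fderiv_apply hX, fderiv_apply hY]

theorem fderiv_comp_sub_apply_eq_zero {n : ℕ} {φ : ℝ → ℝ} {i j : Fin n} {z w : Fin n → ℝ}
    (hφ : DifferentiableAt ℝ φ (z i - z j)) (hwi : w i = 0) (hwj : w j = 0) :
    fderiv ℝ (fun z : Fin n → ℝ => φ (z i - z j)) z w = 0 := by
  have hsub := (hasFDerivAt_apply (𝕜 := ℝ) (F' := fun _ => ℝ) i z).fun_sub
    (hasFDerivAt_apply (𝕜 := ℝ) (F' := fun _ => ℝ) j z)
  rw [show (fun z : Fin n → ℝ => φ (z i - z j)) = φ ∘ fun z => z i - z j from rfl,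
    (hφ.hasDerivAt.comp_hasFDerivAt z hsub).fderiv]
  simp [hwi, hwj]

section Pendulum

variable (m₁ m₂ r₁ r₂ g : ℝ)

theorem differentiableAt_X₁pend (z : Fin 4 → ℝ) :
    DifferentiableAt ℝ (X₁pend m₁ m₂ r₁ r₂ g) z := by
  rw [differentiableAt_pi]
  intro i
  fin_cases i <;> simp [X₁pend, Δpend, a₁pend, a₂pend] <;> fun_prop

theorem differentiableAt_X₂pend (z : Fin 4 → ℝ) :
    DifferentiableAt ℝ (X₂pend m₁ m₂ r₁ r₂) z := by
  rw [differentiableAt_pi]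
  intro i
  fin_cases i <;> simp [X₂pend, b₁pend, b₂pend] <;> fun_prop

theorem fderiv_Δpend_mul_apply {z w : Fin 4 → ℝ} (hw₀ : w 0 = 0) (hw₁ : w 1 = 0) (j : Fin 4) :
    fderiv ℝ (fun z => Δpend m₁ m₂ r₁ r₂ z * z j) z w = Δpend m₁ m₂ r₁ r₂ z * w j := by
  have hΔ : DifferentiableAt ℝ (Δpend m₁ m₂ r₁ r₂) z := by unfold Δpend; fun_prop
  have hΔw : fderiv ℝ (Δpend m₁ m₂ r₁ r₂) z w = 0 :=
    fderiv_comp_sub_apply_eq_zero (φ := fun t => r₁ * r₂ * (m₁ + m₂ * Real.sin t ^ 2))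
      (by fun_prop) hw₀ hw₁
  rw [fderiv_fun_mul hΔ (differentiableAt_apply j z)]
  simp [hΔw, (hasFDerivAt_apply j z).fderiv]

theorem X₃pend_apply_zero (z : Fin 4 → ℝ) :
    X₃pend m₁ m₂ r₁ r₂ g z 0 = -(Δpend m₁ m₂ r₁ r₂ z * b₁pend m₁ m₂ r₁ r₂ z) := by
  rw [X₃pend, lieBracket_apply_eq (differentiableAt_X₁pend ..) (differentiableAt_X₂pend ..)]
  simp only [X₁pend, Matrix.cons_val_zero]
  rw [fderiv_Δpend_mul_apply _ _ _ _ (by simp [X₂pend]) (by simp [X₂pend])]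
  simp [X₂pend]

theorem X₃pend_apply_one (z : Fin 4 → ℝ) :
    X₃pend m₁ m₂ r₁ r₂ g z 1 = -(Δpend m₁ m₂ r₁ r₂ z * b₂pend m₁ m₂ r₁ r₂ z) := by
  rw [X₃pend, lieBracket_apply_eq (differentiableAt_X₁pend ..) (differentiableAt_X₂pend ..)]
  simp only [X₁pend, Matrix.cons_val_one, Matrix.cons_val_zero]
  rw [fderiv_Δpend_mul_apply _ _ _ _ (by simp [X₂pend]) (by simp [X₂pend])]
  simp [X₂pend]

variable {m₁ m₂ r₁ r₂}

theorem Δpend_pos (hm₁ : 0 < m₁) (hm₂ : 0 < m₂) (hr₁ : 0 < r₁) (hr₂ : 0 < r₂)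
    (z : Fin 4 → ℝ) : 0 < Δpend m₁ m₂ r₁ r₂ z := by
  unfold Δpend
  positivity

/-- Otherwise `m₂ r₁ cos²(θ₁ − θ₂) = r₂ m₁ cos(θ₁ − θ₂) = r₁ (m₁ + m₂)`, forcing `cos² > 1`. -/
theorem b₁pend_ne_zero_or_b₂pend_ne_zero (hm₁ : 0 < m₁) (hm₂ : 0 < m₂) (hr₁ : 0 < r₁)
    (hr₂ : 0 < r₂) (z : Fin 4 → ℝ) : b₁pend m₁ m₂ r₁ r₂ z ≠ 0 ∨ b₂pend m₁ m₂ r₁ r₂ z ≠ 0 := by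
  by_contra! ⟨hb₁, hb₂⟩
  set c := Real.cos (z 0 - z 1)
  have e₁ : r₁ * m₂ * c = r₂ * m₁ :=
    sub_eq_zero.1 ((mul_eq_zero.1 hb₁).resolve_left (by positivity))
  have e₂ : r₂ * m₁ * c = r₁ * (m₁ + m₂) :=
    sub_eq_zero.1 ((mul_eq_zero.1 hb₂).resolve_left (by positivity))
  have hc : c ^ 2 ≤ 1 := Real.cos_sq_le_one _
  have : r₁ * (m₂ * c ^ 2) = r₁ * (m₁ + m₂) := by linear_combination c * e₁ + e₂
  nlinarith [mul_pos hr₁ hm₁, mul_pos hr₁ hm₂]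

end Pendulum

theorem X₂_X₃_linearIndependent_general
    (m₁ m₂ r₁ r₂ g : ℝ) (hm₁ : 0 < m₁) (hm₂ : 0 < m₂)
    (hr₁ : 0 < r₁) (hr₂ : 0 < r₂) :
    ∀ z : Fin 4 → ℝ,
      LinearIndependent ℝ ![X₂pend m₁ m₂ r₁ r₂ z, X₃pend m₁ m₂ r₁ r₂ g z] := by
  intro z
  have hΔ := (Δpend_pos hm₁ hm₂ hr₁ hr₂ z).ne'
  rcases b₁pend_ne_zero_or_b₂pend_ne_zero hm₁ hm₂ hr₁ hr₂ z with hb | hb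
  · refine .pair_of_map_eq_zero_of_map_ne_zero (LinearMap.proj 0) ?_ (by simp [X₂pend]) ?_
    · exact fun h => hb (by simpa [X₂pend] using congrFun h 2)
    · simpa [X₃pend_apply_zero] using And.intro hΔ hb
  · refine .pair_of_map_eq_zero_of_map_ne_zero (LinearMap.proj 1) ?_ (by simp [X₂pend]) ?_
    · exact fun h => hb (by simpa [X₂pend] using congrFun h 3)
    · simpa [X₃pend_apply_one] using And.intro hΔ hb

/-- Under the stated genericity conditions, the vector fields `X₂` and
`X₃ = [X₁, X₂]` are linearly independent at every point of `ℝ⁴`. -/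
theorem X₂_X₃_linearIndependent
    (m₁ m₂ r₁ r₂ g : ℝ) (hm₁ : 0 < m₁) (hm₂ : 0 < m₂)
    (hr₁ : 0 < r₁) (hr₂ : 0 < r₂) (hg : 0 < g)
    (h1 : m₁ * (r₂ ^ 2 - r₁ * (r₁ + r₂)) ≠ m₂ * r₁ * (r₁ + r₂))
    (h2 : m₁ * (r₂ ^ 2 - r₁ * (r₁ - r₂)) ≠ m₂ * r₁ * (r₁ - r₂))
    (h3 : m₁ * r₁ ^ 2 ≠ m₂ * (r₂ ^ 2 - r₁ ^ 2)) :
    ∀ z : Fin 4 → ℝ,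
      LinearIndependent ℝ ![X₂pend m₁ m₂ r₁ r₂ z, X₃pend m₁ m₂ r₁ r₂ g z] :=
  X₂_X₃_linearIndependent_general m₁ m₂ r₁ r₂ g hm₁ hm₂ hr₁ hr₂
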